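/- arXiv:math/0608125 — 4 statements merged into one kernel-verified Lean document; each statement's English description precedes it below -/
import Mathlib

section
/- Let S be a grope frame, m ≤ n, and W ∈ W(E_m) a word. Then the word e_{m,n}[W] ∈ W(E_n) is reduced if and only if W is reduced. -/
/-! Basic definitions for grope groups, following Cencelj–Eda–Vavpetič,
"Rigidity of the minimal grope group". -/

/-- A *grope frame* is a set `S` of finite sequences of natural numbers containing the
empty sequence and such that for every `s ∈ S` there is `n > 0` with
`{i | s ++ [i] ∈ S} = {0, …, 2n - 1}`. -/
structure GropeFrame where
  S : Set (List ℕ)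
  nil_mem : [] ∈ S
  branch : ∀ s ∈ S, ∃ n : ℕ, 0 < n ∧ {i : ℕ | s ++ [i] ∈ S} = Set.Iio (2 * n)

namespace GropeFrame

/-- The number of children of a sequence `s` in the frame. -/
noncomputable def deg (G : GropeFrame) (s : List ℕ) : ℕ :=
  sInf {i : ℕ | s ++ [i] ∉ G.S}

theorem deg_eq (G : GropeFrame) {s : List ℕ} {n : ℕ}
    (hn : {i : ℕ | s ++ [i] ∈ G.S} = Set.Iio (2 * n)) : G.deg s = 2 * n := by
  have hc : {i : ℕ | s ++ [i] ∉ G.S} = Set.Ici (2 * n) := by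
    ext i
    have h := Set.ext_iff.1 hn i
    simp only [Set.mem_setOf_eq, Set.mem_Iio] at h
    simp [Set.mem_Ici, h, not_lt]
  rw [deg, hc, csInf_Ici]

theorem mem_of_lt_deg (G : GropeFrame) {s : List ℕ} (hs : s ∈ G.S) {i : ℕ}
    (hi : i < G.deg s) : s ++ [i] ∈ G.S := by
  obtain ⟨n, -, hn⟩ := G.branch s hs
  rw [G.deg_eq hn] at hi
  exact (Set.ext_iff.1 hn i).2 hi

/-- `s` is binary branched in the frame `G` if its set of children indices is `{0, 1}`. -/
def BinaryBranched (G : GropeFrame) (s : List ℕ) : Prop :=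
  {i : ℕ | s ++ [i] ∈ G.S} = {0, 1}

end GropeFrame

/-- The set `E_m` of free generators `c_s`, `s ∈ S`, `lh s = m`, of the free group `F_m`. -/
abbrev GropeGen (G : GropeFrame) (m : ℕ) : Type :=
  {s : List ℕ // s ∈ G.S ∧ s.length = m}

/-- The generator `c_{s i}` obtained by appending `i` to `s`. -/
def gropeChild {G : GropeFrame} {m : ℕ} (x : GropeGen G m) (i : ℕ)
    (hi : i < G.deg x.1) : GropeGen G (m + 1) :=
  ⟨x.1 ++ [i], ⟨G.mem_of_lt_deg x.2.1 hi, by simp [x.2.2]⟩⟩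

open scoped commutatorElement

/-- The bonding homomorphism `e_m : F_m → F_{m+1}`, sending `c_s` to
`[c_{s0}, c_{s1}] ⋯ [c_{s(2k-2)}, c_{s(2k-1)}]`. -/
noncomputable def gropeE (G : GropeFrame) (m : ℕ) :
    FreeGroup (GropeGen G m) →* FreeGroup (GropeGen G (m + 1)) :=
  FreeGroup.lift fun x =>
    (List.ofFn fun j : Fin (G.deg x.1 / 2) =>
      ⁅FreeGroup.of (gropeChild x (2 * (j : ℕ)) (by have := j.isLt; omega)),
        FreeGroup.of (gropeChild x (2 * (j : ℕ) + 1) (by have := j.isLt; omega))⁆).prod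

/-- The composite `e_{m,n} = e_{n-1} ∘ ⋯ ∘ e_m : F_m → F_n`. -/
noncomputable def gropeEle (G : GropeFrame) {m n : ℕ} (h : m ≤ n)
    (x : FreeGroup (GropeGen G m)) : FreeGroup (GropeGen G n) :=
  Nat.leRecOn (C := fun k => FreeGroup (GropeGen G k)) h
    (fun {k} y => gropeE G k y) x

/-- For `v ∈ F_n`, `MemF G m v` says that `v` lies in (the image of) `F_m`,
i.e. in the image of `e_{m,n}`. -/
def MemF (G : GropeFrame) (m : ℕ) {n : ℕ} (v : FreeGroup (GropeGen G n)) : Prop :=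
  ∃ (h : m ≤ n) (x : FreeGroup (GropeGen G m)), gropeEle G h x = v

/-- The formal inverse `W⁻` of a word. -/
def wordInv {α : Type*} (w : List (α × Bool)) : List (α × Bool) :=
  (w.map fun p => (p.1, !p.2)).reverse

/-- A word is reduced if no letter is adjacent to its formal inverse. -/
def IsReducedWord {α : Type*} (w : List (α × Bool)) : Prop :=
  w.Chain' fun a b => ¬(a.1 = b.1 ∧ b.2 = !a.2)

/-- A word is cyclically reduced if it is reduced and moreover its first and last letters
are not mutually inverse. -/
def IsCyclicallyReducedWord {α : Type*} (w : List (α × Bool)) : Prop :=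
  IsReducedWord w ∧ ∀ a b : α × Bool, w.getLast? = some a → w.head? = some b →
    ¬(a.1 = b.1 ∧ b.2 = !a.2)

/-- Expansion of a single letter: `c_t` is replaced by
`c_{t0} c_{t1} c_{t0}⁻ c_{t1}⁻ ⋯ c_{t(2k-2)} c_{t(2k-1)} c_{t(2k-2)}⁻ c_{t(2k-1)}⁻` and
`c_t⁻` by the formal inverse of this word. -/
noncomputable def letterExp (G : GropeFrame) {m : ℕ} (a : GropeGen G m × Bool) :
    List (GropeGen G (m + 1) × Bool) :=
  let P : List (GropeGen G (m + 1) × Bool) :=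
    (List.ofFn fun j : Fin (G.deg a.1.1 / 2) =>
      [(gropeChild a.1 (2 * (j : ℕ)) (by have := j.isLt; omega), true),
       (gropeChild a.1 (2 * (j : ℕ) + 1) (by have := j.isLt; omega), true),
       (gropeChild a.1 (2 * (j : ℕ)) (by have := j.isLt; omega), false),
       (gropeChild a.1 (2 * (j : ℕ) + 1) (by have := j.isLt; omega), false)]).flatten
  if a.2 then P else wordInv P

/-- The word `e_{m,n}[W]` obtained from `W ∈ W(E_m)` by iterated letter expansion. -/
noncomputable def wordExp (G : GropeFrame) {m n : ℕ} (h : m ≤ n)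
    (w : List (GropeGen G m × Bool)) : List (GropeGen G n × Bool) :=
  Nat.leRecOn (C := fun k => List (GropeGen G k × Bool)) h
    (fun {k} v => (v.map (letterExp G)).flatten) w

/-- `IsSmall G hmn W V` : the subword `V` of the reduced word `W ∈ W(E_n)` (where
`W ∈ F_m`, with `W ≡ e_{m,n}[W₀]`) is *small*, i.e. there are a letter `c` occurring in
`W₀` and `i ∈ ℕ` such that `V` is a subword of `e_{m+1,n}[c_{si}]` (resp. of
`e_{m+1,n}[c_{si}⁻]` when the occurring letter is negative). -/
def IsSmall (G : GropeFrame) {m n : ℕ} (hmn : m < n)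
    (W V : List (GropeGen G n × Bool)) : Prop :=
  ∃ W₀ : List (GropeGen G m × Bool), wordExp G hmn.le W₀ = W ∧
    ∃ c ∈ W₀, ∃ (i : ℕ) (hi : i < G.deg c.1.1),
      V <:+: wordExp G (Nat.succ_le_of_lt hmn) [(gropeChild c.1 i hi, c.2)]

/-!
The expansion of `c_t` is a nonempty reduced word beginning with `c_{t0}` and ending with
`c_{t(k-1)}⁻` (`k ≥ 2` the number of children of `t`), so that of `c_t⁻` begins with
`c_{t(k-1)}` and ends with `c_{t0}⁻`. Hence the only possible cancellation in `e_m[W]` is at the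
junction of the expansions of adjacent letters `a b` of `W`, and since `0 ≠ k - 1` it occurs
exactly when `b = a⁻`.
-/

namespace GropeFrame

variable {G : GropeFrame} {s : List ℕ}

theorem two_le_deg (hs : s ∈ G.S) : 2 ≤ G.deg s := by
  obtain ⟨n, hn0, hn⟩ := G.branch s hs
  rw [G.deg_eq hn]
  omega

theorem two_mul_deg_div_two (hs : s ∈ G.S) : 2 * (G.deg s / 2) = G.deg s := by
  obtain ⟨n, -, hn⟩ := G.branch s hs
  rw [G.deg_eq hn]
  omega

end GropeFrame

namespace FreeGroup

variable {α : Type*} {L : List (α × Bool)}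

theorem isReduced_invRev_iff : IsReduced (invRev L) ↔ IsReduced L := by
  classical
  simp only [isReduced_iff_reduce_eq, reduce_invRev, invRev_injective.eq_iff]

end FreeGroup

theorem isReducedWord_iff_isReduced {α : Type*} {w : List (α × Bool)} :
    IsReducedWord w ↔ FreeGroup.IsReduced w :=
  List.IsChain.iff fun ⟨_, b⟩ ⟨_, b'⟩ => by cases b <;> cases b' <;> simp

variable {G : GropeFrame} {m : ℕ}

theorem gropeChild_inj {x y : GropeGen G m} {i j : ℕ} {hi : i < G.deg x.1}
    {hj : j < G.deg y.1} : gropeChild x i hi = gropeChild y j hj ↔ x = y ∧ i = j := by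
  refine ⟨fun h => ?_, fun ⟨hxy, hij⟩ => by subst hxy hij; rfl⟩
  obtain ⟨hxy, hij⟩ := List.append_inj' (congrArg Subtype.val h) rfl
  exact ⟨Subtype.ext hxy, by simpa using hij⟩

noncomputable def commutatorWord (G : GropeFrame) {m : ℕ} (x : GropeGen G m) :
    List (GropeGen G (m + 1) × Bool) :=
  (List.ofFn fun j : Fin (G.deg x.1 / 2) =>
    [(gropeChild x (2 * (j : ℕ)) (by have := j.isLt; omega), true),
     (gropeChild x (2 * (j : ℕ) + 1) (by have := j.isLt; omega), true),
     (gropeChild x (2 * (j : ℕ)) (by have := j.isLt; omega), false),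
     (gropeChild x (2 * (j : ℕ) + 1) (by have := j.isLt; omega), false)]).flatten

theorem letterExp_false (x : GropeGen G m) :
    letterExp G (x, false) = FreeGroup.invRev (commutatorWord G x) := rfl

theorem head?_commutatorWord (x : GropeGen G m) (h0 : 0 < G.deg x.1) :
    (commutatorWord G x).head? = some (gropeChild x 0 h0, true) := by
  have h2 := G.two_le_deg x.2.1
  obtain ⟨k, hk⟩ : ∃ k, G.deg x.1 / 2 = k + 1 := ⟨G.deg x.1 / 2 - 1, by omega⟩
  rw [commutatorWord, List.ofFn_congr hk, List.ofFn_succ, List.flatten_cons]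
  simp

theorem getLast?_commutatorWord (x : GropeGen G m) (h1 : G.deg x.1 - 1 < G.deg x.1) :
    (commutatorWord G x).getLast? = some (gropeChild x (G.deg x.1 - 1) h1, false) := by
  have h2 := G.two_le_deg x.2.1
  have heven := G.two_mul_deg_div_two x.2.1
  obtain ⟨k, hk⟩ : ∃ k, G.deg x.1 / 2 = k + 1 := ⟨G.deg x.1 / 2 - 1, by omega⟩
  rw [commutatorWord, List.ofFn_congr hk, List.ofFn_succ', List.concat_eq_append,
    List.flatten_append, List.getLast?_append_of_ne_nil _ (by simp)]
  simp only [List.flatten_cons, List.flatten_nil, List.append_nil, Fin.val_last, Fin.val_cast,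
    List.getLast?_cons_cons, List.getLast?_singleton, Option.some.injEq, Prod.mk.injEq, and_true]
  exact gropeChild_inj.2 ⟨rfl, by omega⟩

theorem isReduced_commutatorWord (x : GropeGen G m) :
    FreeGroup.IsReduced (commutatorWord G x) := by
  rw [FreeGroup.IsReduced, commutatorWord, List.isChain_flatten (by simp [List.mem_ofFn])]
  refine ⟨List.forall_mem_ofFn_iff.2 fun j => ?_, List.isChain_ofFn.2 fun j hj => ?_⟩
  · simp [gropeChild_inj]
  · simp [gropeChild_inj]
    omega

theorem commutatorWord_ne_nil (x : GropeGen G m) : commutatorWord G x ≠ [] := by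
  have := G.two_le_deg x.2.1
  intro h
  simpa [h] using head?_commutatorWord x (by omega)

theorem letterExp_ne_nil (a : GropeGen G m × Bool) : letterExp G a ≠ [] := by
  obtain ⟨x, _ | _⟩ := a
  · simpa [letterExp_false, FreeGroup.invRev] using commutatorWord_ne_nil x
  · exact commutatorWord_ne_nil x

theorem isReduced_letterExp (a : GropeGen G m × Bool) : FreeGroup.IsReduced (letterExp G a) := by
  obtain ⟨x, _ | _⟩ := a
  · exact FreeGroup.isReduced_invRev_iff.2 (isReduced_commutatorWord x)
  · exact isReduced_commutatorWord x

theorem head?_letterExp (a : GropeGen G m × Bool) :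
    ∃ (i : ℕ) (hi : i < G.deg a.1.1), (letterExp G a).head? = some (gropeChild a.1 i hi, true) ∧
      i = if a.2 then 0 else G.deg a.1.1 - 1 := by
  obtain ⟨x, _ | _⟩ := a <;> have := G.two_le_deg x.2.1
  · refine ⟨G.deg x.1 - 1, by dsimp only; omega, ?_, rfl⟩
    have hlast := getLast?_commutatorWord x (by omega : G.deg x.1 - 1 < G.deg x.1)
    simp [letterExp_false, FreeGroup.invRev, hlast]
  · exact ⟨0, by dsimp only; omega, head?_commutatorWord x _, rfl⟩

theorem getLast?_letterExp (a : GropeGen G m × Bool) :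
    ∃ (i : ℕ) (hi : i < G.deg a.1.1),
      (letterExp G a).getLast? = some (gropeChild a.1 i hi, false) ∧
      i = if a.2 then G.deg a.1.1 - 1 else 0 := by
  obtain ⟨x, _ | _⟩ := a <;> have := G.two_le_deg x.2.1
  · refine ⟨0, by dsimp only; omega, ?_, rfl⟩
    have hhead := head?_commutatorWord x (by omega : 0 < G.deg x.1)
    simp [letterExp_false, FreeGroup.invRev, hhead]
  · exact ⟨G.deg x.1 - 1, by dsimp only; omega, getLast?_commutatorWord x _, rfl⟩

theorem letterExp_junction_iff (a b : GropeGen G m × Bool) :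
    (∀ x ∈ (letterExp G a).getLast?, ∀ y ∈ (letterExp G b).head?, x.1 = y.1 → x.2 = y.2) ↔
      (a.1 = b.1 → a.2 = b.2) := by
  obtain ⟨ia, hia, hla, hia'⟩ := getLast?_letterExp a
  obtain ⟨ib, hib, hhb, hib'⟩ := head?_letterExp b
  simp only [hla, hhb, Option.mem_def, Option.some.injEq, forall_eq', gropeChild_inj, not_and,
    Bool.false_eq_true, imp_false]
  refine forall_congr' fun hab => ?_
  have := G.two_le_deg a.1.2.1
  rw [← hab] at hib'
  obtain ⟨x, _ | _⟩ := a <;> obtain ⟨y, _ | _⟩ := b <;> simp_all <;> omega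

theorem isReduced_flatten_map_letterExp_iff {W : List (GropeGen G m × Bool)} :
    FreeGroup.IsReduced (W.map (letterExp G)).flatten ↔ FreeGroup.IsReduced W := by
  have hnil : [] ∉ W.map (letterExp G) := fun h =>
    let ⟨a, _, ha⟩ := List.mem_map.1 h
    letterExp_ne_nil a ha
  have hblocks : ∀ l ∈ W.map (letterExp G), FreeGroup.IsReduced l :=
    List.forall_mem_map.2 fun a _ => isReduced_letterExp a
  rw [FreeGroup.IsReduced, List.isChain_flatten hnil, List.isChain_map]
  exact (and_iff_right hblocks).trans (List.IsChain.iff letterExp_junction_iff)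

theorem wordExp_self {h : m ≤ m} (W : List (GropeGen G m × Bool)) : wordExp G h W = W :=
  Nat.leRecOn_self (C := fun k => List (GropeGen G k × Bool)) W

theorem wordExp_succ {n : ℕ} (h : m ≤ n) {h' : m ≤ n + 1} (W : List (GropeGen G m × Bool)) :
    wordExp G h' W = ((wordExp G h W).map (letterExp G)).flatten :=
  Nat.leRecOn_succ (C := fun k => List (GropeGen G k × Bool)) h W

/-- **Lemma 1 (basic1).** For a grope frame `S`, `m ≤ n` and a word `W ∈ 𝒲(E_m)`,
the word `e_{m,n}[W] ∈ 𝒲(E_n)` is reduced if and only if `W` is reduced. -/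
theorem wordExp_isReducedWord_iff (G : GropeFrame) {m n : ℕ} (h : m ≤ n)
    (W : List (GropeGen G m × Bool)) :
    IsReducedWord (wordExp G h W) ↔ IsReducedWord W := by
  simp only [isReducedWord_iff_isReduced]
  induction n, h using Nat.le_induction with
  | base => rw [wordExp_self]
  | succ n hmn ih => rw [wordExp_succ hmn, isReduced_flatten_map_letterExp_iff, ih]
end

section
/- Let S be a grope frame, m < n, and A, B, C ∈ W(E_n) reduced words (possibly empty) such that ABA⁻CB⁻C⁻ ≠ e in F_n and both AB and A⁻CB⁻C⁻ are reduced words. Then: (3.1) if A ≡ A₀B, then A₀B and A₀⁻CB⁻C⁻ are reduced, A₀BA₀⁻CB⁻C⁻ = ABA⁻CB⁻C⁻ in F_n, and if in addition A₀BA₀⁻, CB⁻C⁻ ∈ F_m then ABA⁻, CB⁻C⁻ ∈ F_m; (3.2) if B ≡ B₀A, then AB₀ and CA⁻B₀⁻C⁻ are reduced, AB₀CA⁻B₀⁻C⁻ = ABA⁻CB⁻C⁻ in F_n, and if in addition AB₀, CA⁻B₀⁻C⁻ ∈ F_m then ABA⁻, CB⁻C⁻ ∈ F_m; (3.3) if B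 ≡ B₀Z and A ≡ A₀Z for non-empty words A₀, B₀ and B₀A₀⁻ is reduced, then A₀ZB₀A₀⁻CZ⁻B₀⁻C⁻ is reduced, and if in addition A₀ZB₀A₀⁻, CZ⁻B₀⁻C⁻ ∈ F_m then ABA⁻, CB⁻C⁻ ∈ F_m. -/
open scoped commutatorElement

/-! Every word claimed to be reduced is a subword of `AB` or of `A⁻CB⁻C⁻`, or is glued from
two such words along a common non-empty overlap. The group identities hold because in
`ABA⁻` the common suffix of `A` and `B` cancels against its inverse. -/

section Words

variable {α : Type*}

theorem wordInv_append (u v : List (α × Bool)) :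
    wordInv (u ++ v) = wordInv v ++ wordInv u :=
  FreeGroup.invRev_append

theorem mk_wordInv (u : List (α × Bool)) :
    FreeGroup.mk (wordInv u) = (FreeGroup.mk u)⁻¹ :=
  FreeGroup.inv_mk.symm

theorem mk_conj_of_common_suffix (X Y Z : List (α × Bool)) :
    FreeGroup.mk (X ++ Z ++ (Y ++ Z) ++ wordInv (X ++ Z)) =
      FreeGroup.mk (X ++ Z ++ Y ++ wordInv X) := by
  simp only [← FreeGroup.mul_mk, mk_wordInv]
  group

theorem isReducedWord_of_common_suffix {A₀ B₀ Z C : List (α × Bool)}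
    (hred1 : IsReducedWord (A₀ ++ Z ++ (B₀ ++ Z)))
    (hred2 : IsReducedWord (wordInv (A₀ ++ Z) ++ C ++ wordInv (B₀ ++ Z) ++ wordInv C))
    (hA₀ : A₀ ≠ []) (hB₀ : B₀ ≠ []) (hB₀A₀ : IsReducedWord (B₀ ++ wordInv A₀)) :
    IsReducedWord (A₀ ++ Z ++ B₀ ++ wordInv A₀ ++ C ++ wordInv Z ++ wordInv B₀ ++ wordInv C) := by
  have hleft : IsReducedWord (A₀ ++ Z ++ B₀ ++ wordInv A₀) :=
    (hred1.prefix ⟨Z, by simp⟩).append_overlap hB₀A₀ hB₀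
  have hright : IsReducedWord (wordInv A₀ ++ (C ++ wordInv Z ++ wordInv B₀ ++ wordInv C)) :=
    hred2.suffix ⟨wordInv Z, by simp [wordInv_append]⟩
  have hglued := hleft.append_overlap hright (by simpa [wordInv] using hA₀)
  simp only [List.append_assoc] at hglued ⊢
  exact hglued

end Words

theorem induction3_general (G : GropeFrame) {m n : ℕ} (A B C : List (GropeGen G n × Bool))
    (hred1 : IsReducedWord (A ++ B))
    (hred2 : IsReducedWord (wordInv A ++ C ++ wordInv B ++ wordInv C)) :
    -- (3.1)
    (∀ A₀, A = A₀ ++ B →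
      IsReducedWord (A₀ ++ B) ∧
      IsReducedWord (wordInv A₀ ++ C ++ wordInv B ++ wordInv C) ∧
      FreeGroup.mk (A₀ ++ B ++ wordInv A₀ ++ C ++ wordInv B ++ wordInv C) =
        FreeGroup.mk (A ++ B ++ wordInv A ++ C ++ wordInv B ++ wordInv C) ∧
      (MemF G m (FreeGroup.mk (A₀ ++ B ++ wordInv A₀)) →
        MemF G m (FreeGroup.mk (C ++ wordInv B ++ wordInv C)) →
        MemF G m (FreeGroup.mk (A ++ B ++ wordInv A)) ∧
        MemF G m (FreeGroup.mk (C ++ wordInv B ++ wordInv C)))) ∧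
    -- (3.2)
    (∀ B₀, B = B₀ ++ A →
      IsReducedWord (A ++ B₀) ∧
      IsReducedWord (C ++ wordInv A ++ wordInv B₀ ++ wordInv C) ∧
      FreeGroup.mk (A ++ B₀ ++ C ++ wordInv A ++ wordInv B₀ ++ wordInv C) =
        FreeGroup.mk (A ++ B ++ wordInv A ++ C ++ wordInv B ++ wordInv C) ∧
      (MemF G m (FreeGroup.mk (A ++ B₀)) →
        MemF G m (FreeGroup.mk (C ++ wordInv A ++ wordInv B₀ ++ wordInv C)) →
        MemF G m (FreeGroup.mk (A ++ B ++ wordInv A)) ∧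
        MemF G m (FreeGroup.mk (C ++ wordInv B ++ wordInv C)))) ∧
    -- (3.3)
    (∀ A₀ B₀ Z, B = B₀ ++ Z → A = A₀ ++ Z → A₀ ≠ [] → B₀ ≠ [] →
      IsReducedWord (B₀ ++ wordInv A₀) →
      IsReducedWord (A₀ ++ Z ++ B₀ ++ wordInv A₀ ++ C ++ wordInv Z ++ wordInv B₀ ++ wordInv C) ∧
      (MemF G m (FreeGroup.mk (A₀ ++ Z ++ B₀ ++ wordInv A₀)) →
        MemF G m (FreeGroup.mk (C ++ wordInv Z ++ wordInv B₀ ++ wordInv C)) →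
        MemF G m (FreeGroup.mk (A ++ B ++ wordInv A)) ∧
        MemF G m (FreeGroup.mk (C ++ wordInv B ++ wordInv C)))) := by
  refine ⟨fun A₀ hA => ?_, fun B₀ hB => ?_, fun A₀ B₀ Z hB hA hA₀ hB₀ hB₀A₀ => ?_⟩
  · subst hA
    have hconj : FreeGroup.mk (A₀ ++ B ++ B ++ wordInv (A₀ ++ B)) =
        FreeGroup.mk (A₀ ++ B ++ wordInv A₀) := by
      simpa using mk_conj_of_common_suffix A₀ [] B
    refine ⟨hred1.prefix ⟨B, rfl⟩, hred2.suffix ⟨wordInv B, by simp [wordInv_append]⟩, ?_,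
      fun h₁ h₂ => ⟨hconj ▸ h₁, h₂⟩⟩
    simp only [← FreeGroup.mul_mk, mk_wordInv]
    group
  · subst hB
    have hconj : FreeGroup.mk (A ++ (B₀ ++ A) ++ wordInv A) = FreeGroup.mk (A ++ B₀) := by
      simpa [wordInv] using mk_conj_of_common_suffix [] B₀ A
    have hinv : C ++ wordInv (B₀ ++ A) ++ wordInv C =
        C ++ wordInv A ++ wordInv B₀ ++ wordInv C := by
      simp [wordInv_append]
    refine ⟨hred1.prefix ⟨A, by simp⟩, hred2.suffix ⟨wordInv A, by simp [wordInv_append]⟩, ?_,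
      fun h₁ h₂ => ⟨hconj ▸ h₁, hinv ▸ h₂⟩⟩
    simp only [← FreeGroup.mul_mk, mk_wordInv]
    group
  · subst hA hB
    have hinv : C ++ wordInv (B₀ ++ Z) ++ wordInv C =
        C ++ wordInv Z ++ wordInv B₀ ++ wordInv C := by
      simp [wordInv_append]
    refine ⟨?_, fun h₁ h₂ => ⟨mk_conj_of_common_suffix A₀ B₀ Z ▸ h₁, hinv ▸ h₂⟩⟩
    exact isReducedWord_of_common_suffix hred1 hred2 hA₀ hB₀ hB₀A₀

/-- **Lemma 12 (induction3).** Let `m < n` and let `A, B, C ∈ 𝒲(E_n)` be reduced words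
(possibly empty) with `ABA⁻CB⁻C⁻ ≠ e` such that `AB` and `A⁻CB⁻C⁻` are reduced words.
Then (3.1)–(3.3) hold. -/
theorem induction3 (G : GropeFrame) {m n : ℕ} (hmn : m < n)
    (A B C : List (GropeGen G n × Bool))
    (hAred : IsReducedWord A) (hBred : IsReducedWord B) (hCred : IsReducedWord C)
    (hne : FreeGroup.mk (A ++ B ++ wordInv A ++ C ++ wordInv B ++ wordInv C) ≠ 1)
    (hred1 : IsReducedWord (A ++ B))
    (hred2 : IsReducedWord (wordInv A ++ C ++ wordInv B ++ wordInv C)) :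
    -- (3.1)
    (∀ A₀, A = A₀ ++ B →
      IsReducedWord (A₀ ++ B) ∧
      IsReducedWord (wordInv A₀ ++ C ++ wordInv B ++ wordInv C) ∧
      FreeGroup.mk (A₀ ++ B ++ wordInv A₀ ++ C ++ wordInv B ++ wordInv C) =
        FreeGroup.mk (A ++ B ++ wordInv A ++ C ++ wordInv B ++ wordInv C) ∧
      (MemF G m (FreeGroup.mk (A₀ ++ B ++ wordInv A₀)) →
        MemF G m (FreeGroup.mk (C ++ wordInv B ++ wordInv C)) →
        MemF G m (FreeGroup.mk (A ++ B ++ wordInv A)) ∧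
        MemF G m (FreeGroup.mk (C ++ wordInv B ++ wordInv C)))) ∧
    -- (3.2)
    (∀ B₀, B = B₀ ++ A →
      IsReducedWord (A ++ B₀) ∧
      IsReducedWord (C ++ wordInv A ++ wordInv B₀ ++ wordInv C) ∧
      FreeGroup.mk (A ++ B₀ ++ C ++ wordInv A ++ wordInv B₀ ++ wordInv C) =
        FreeGroup.mk (A ++ B ++ wordInv A ++ C ++ wordInv B ++ wordInv C) ∧
      (MemF G m (FreeGroup.mk (A ++ B₀)) →
        MemF G m (FreeGroup.mk (C ++ wordInv A ++ wordInv B₀ ++ wordInv C)) →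
        MemF G m (FreeGroup.mk (A ++ B ++ wordInv A)) ∧
        MemF G m (FreeGroup.mk (C ++ wordInv B ++ wordInv C)))) ∧
    -- (3.3)
    (∀ A₀ B₀ Z, B = B₀ ++ Z → A = A₀ ++ Z → A₀ ≠ [] → B₀ ≠ [] →
      IsReducedWord (B₀ ++ wordInv A₀) →
      IsReducedWord (A₀ ++ Z ++ B₀ ++ wordInv A₀ ++ C ++ wordInv Z ++ wordInv B₀ ++ wordInv C) ∧
      (MemF G m (FreeGroup.mk (A₀ ++ Z ++ B₀ ++ wordInv A₀)) →
        MemF G m (FreeGroup.mk (C ++ wordInv Z ++ wordInv B₀ ++ wordInv C)) →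
        MemF G m (FreeGroup.mk (A ++ B ++ wordInv A)) ∧
        MemF G m (FreeGroup.mk (C ++ wordInv B ++ wordInv C)))) :=
  induction3_general G A B C hred1 hred2
end

section
/- Let F be a free group on a set C of free generators and let c, d ∈ C be distinct generators. If [c,d] = [u,v] for some u, v ∈ F, then neither u nor v belongs to the commutator subgroup [F,F] of F. -/
/-!
If `u ∈ [F,F]`, then `⁅u, v⁆` and `⁅v, u⁆` lie in `⁅[F,F], F⁆`, the term of index 2 of the lower
central series. But `⁅c, d⁆` does not: sending `c ↦ r 1`, `d ↦ sr 0` and every other generator to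
`1` maps `F` to the dihedral group of order 8, which is nilpotent of class 2, while
`⁅r 1, sr 0⁆ = r 2 ≠ 1`.
-/

open scoped commutatorElement

namespace Subgroup

variable {G : Type*} [Group G]

theorem commutatorElement_mem_lowerCentralSeries_two_of_mem_commutator_left {u : G}
    (hu : u ∈ _root_.commutator G) (v : G) : ⁅u, v⁆ ∈ (⊤ : Subgroup G).lowerCentralSeries 2 :=
  commutator_mem_commutator hu (mem_top v)

theorem commutatorElement_mem_lowerCentralSeries_two_of_mem_commutator_right (u : G) {v : G}
    (hv : v ∈ _root_.commutator G) : ⁅u, v⁆ ∈ (⊤ : Subgroup G).lowerCentralSeries 2 := by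
  rw [← inv_mem_iff, commutatorElement_inv]
  exact commutatorElement_mem_lowerCentralSeries_two_of_mem_commutator_left hv u

end Subgroup

namespace DihedralGroup

theorem lowerCentralSeries_two_eq_bot :
    (⊤ : Subgroup (DihedralGroup 4)).lowerCentralSeries 2 = ⊥ := by
  rw [Subgroup.lowerCentralSeries_succ, Subgroup.top_lowerCentralSeries_one,
    Subgroup.commutator_eq_bot_iff_le_centralizer, commutator_def, Subgroup.commutator_le]
  have hcentral : ∀ a b c : DihedralGroup 4, c * ⁅a, b⁆ = ⁅a, b⁆ * c := by decide
  exact fun a _ b _ c _ => hcentral a b c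

theorem commutatorElement_r_one_sr_zero_ne_one :
    ⁅(r 1 : DihedralGroup 4), (sr 0 : DihedralGroup 4)⁆ ≠ 1 := by
  decide

end DihedralGroup

namespace FreeGroup

open DihedralGroup in
theorem commutatorElement_of_of_notMem_lowerCentralSeries_two {α : Type*} [DecidableEq α]
    {c d : α} (hcd : c ≠ d) :
    ⁅of c, of d⁆ ∉ (⊤ : Subgroup (FreeGroup α)).lowerCentralSeries 2 := by
  intro hmem
  let f : FreeGroup α →* DihedralGroup 4 :=
    lift fun a => if a = c then r 1 else if a = d then sr 0 else 1
  have hf : f ⁅of c, of d⁆ = ⁅(r 1 : DihedralGroup 4), (sr 0 : DihedralGroup 4)⁆ := by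
    simp [f, hcd.symm]
  have himage : f ⁅of c, of d⁆ ∈ ((⊤ : Subgroup (FreeGroup α)).map f).lowerCentralSeries 2 := by
    rw [← Subgroup.map_lowerCentralSeries]
    exact Subgroup.mem_map_of_mem f hmem
  have hbot : f ⁅of c, of d⁆ ∈ (⊤ : Subgroup (DihedralGroup 4)).lowerCentralSeries 2 :=
    Subgroup.lowerCentralSeries_mono 2 le_top himage
  rw [lowerCentralSeries_two_eq_bot, Subgroup.mem_bot, hf] at hbot
  exact commutatorElement_r_one_sr_zero_ne_one hbot

end FreeGroup

/-- **Lemma 18 (free1).** Let `F` be a free group on a set `C` and `c, d ∈ C` be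
distinct generators. If `[c,d] = [u,v]` for `u, v ∈ F`, then neither `u` nor `v`
belongs to the commutator subgroup of `F`. -/
theorem free1 {α : Type*} (c d : α) (hcd : c ≠ d) (u v : FreeGroup α)
    (h : ⁅FreeGroup.of c, FreeGroup.of d⁆ = ⁅u, v⁆) :
    u ∉ commutator (FreeGroup α) ∧ v ∉ commutator (FreeGroup α) := by
  classical
  have hnot := h ▸ FreeGroup.commutatorElement_of_of_notMem_lowerCentralSeries_two hcd
  refine ⟨fun hu => hnot ?_, fun hv => hnot ?_⟩
  · exact Subgroup.commutatorElement_mem_lowerCentralSeries_two_of_mem_commutator_left hu v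
  · exact Subgroup.commutatorElement_mem_lowerCentralSeries_two_of_mem_commutator_right u hv
end

section
/- Let F be a free group on a set B of free generators and let b₀, b₁ ∈ B be distinct. Suppose c, d ∈ {b, b⁻¹ : b ∈ B} and [b₀,b₁] = [x⁻¹cx, y⁻¹dy] for some x, y ∈ F. Then c, d ∈ {b₀, b₀⁻¹, b₁, b₁⁻¹}, and moreover c ∈ {b₀, b₀⁻¹} if and only if d ∈ {b₁, b₁⁻¹}, and c ∈ {b₁, b₁⁻¹} if and only if d ∈ {b₀, b₀⁻¹}. -/
/-!
Map `F` to the integral Heisenberg group by `b₀ ↦ (1, 0, 0)`, `b₁ ↦ (0, 1, 0)` and every other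
generator to `1`. Commutators there are central and only see the images in `ℤ²`:
`⁅u, v⁆ = (0, 0, det (u, v))`, so the conjugations are invisible and the hypothesis says that
`det (c̄, d̄) = 1`. The image in `ℤ²` of a generator or its inverse is `±e₀` for `b₀^{±1}`, `±e₁`
for `b₁^{±1}` and `0` otherwise, so determinant one forces one of `c, d` to be `b₀^{±1}` and the
other `b₁^{±1}`.
-/

open scoped commutatorElement

@[ext]
structure Heisenberg (R : Type*) where
  a : R
  b : R
  t : R

namespace Heisenberg

variable {R : Type*} [CommRing R]

-- `⟨a, b, t⟩` is the unitriangular matrix `!![1, a, t; 0, 1, b; 0, 0, 1]`.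
instance : Mul (Heisenberg R) := ⟨fun u v => ⟨u.a + v.a, u.b + v.b, u.t + v.t + u.a * v.b⟩⟩
instance : One (Heisenberg R) := ⟨⟨0, 0, 0⟩⟩
instance : Inv (Heisenberg R) := ⟨fun u => ⟨-u.a, -u.b, -u.t + u.a * u.b⟩⟩

@[simp] theorem mul_a (u v : Heisenberg R) : (u * v).a = u.a + v.a := rfl
@[simp] theorem mul_b (u v : Heisenberg R) : (u * v).b = u.b + v.b := rfl
@[simp] theorem mul_t (u v : Heisenberg R) : (u * v).t = u.t + v.t + u.a * v.b := rfl
@[simp] theorem one_a : (1 : Heisenberg R).a = 0 := rfl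
@[simp] theorem one_b : (1 : Heisenberg R).b = 0 := rfl
@[simp] theorem one_t : (1 : Heisenberg R).t = 0 := rfl
@[simp] theorem inv_a (u : Heisenberg R) : u⁻¹.a = -u.a := rfl
@[simp] theorem inv_b (u : Heisenberg R) : u⁻¹.b = -u.b := rfl
@[simp] theorem inv_t (u : Heisenberg R) : u⁻¹.t = -u.t + u.a * u.b := rfl

instance : Group (Heisenberg R) where
  mul_assoc u v w := by ext <;> simp only [mul_a, mul_b, mul_t] <;> ring
  one_mul u := by ext <;> simp
  mul_one u := by ext <;> simp
  inv_mul_cancel u := by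
    ext <;> simp only [mul_a, mul_b, mul_t, inv_a, inv_b, inv_t, one_a, one_b, one_t] <;> ring

theorem commutator_eq (u v : Heisenberg R) : ⁅u, v⁆ = ⟨0, 0, u.a * v.b - v.a * u.b⟩ := by
  ext <;> simp only [commutatorElement_def, mul_a, mul_b, mul_t, inv_a, inv_b, inv_t] <;> ring

theorem commutator_conj_conj (x u y v : Heisenberg R) :
    ⁅x⁻¹ * u * x, y⁻¹ * v * y⁆ = ⁅u, v⁆ := by
  simp only [commutator_eq, mul_a, mul_b, inv_a, inv_b]
  ring_nf

end Heisenberg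

namespace FreeGroup

variable {β : Type*} [DecidableEq β]

def toHeisenberg (b₀ b₁ : β) : FreeGroup β →* Heisenberg ℤ :=
  lift fun b => ⟨if b = b₀ then 1 else 0, if b = b₁ then 1 else 0, 0⟩

variable {b₀ b₁ : β}

theorem toHeisenberg_commutator_of_of (hb : b₀ ≠ b₁) :
    toHeisenberg b₀ b₁ ⁅of b₀, of b₁⁆ = ⟨0, 0, 1⟩ := by
  simp [toHeisenberg, Heisenberg.commutator_eq, hb, hb.symm]

theorem eq_of_or_inv_of_toHeisenberg_a_ne_zero {e : FreeGroup β} {b : β}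
    (he : e = of b ∨ e = (of b)⁻¹) (ha : (toHeisenberg b₀ b₁ e).a ≠ 0) :
    e = of b₀ ∨ e = (of b₀)⁻¹ := by
  obtain rfl : b = b₀ := by
    by_contra hb
    rcases he with rfl | rfl <;> simp [toHeisenberg, hb] at ha
  exact he

theorem eq_of_or_inv_of_toHeisenberg_b_ne_zero {e : FreeGroup β} {b : β}
    (he : e = of b ∨ e = (of b)⁻¹) (hb : (toHeisenberg b₀ b₁ e).b ≠ 0) :
    e = of b₁ ∨ e = (of b₁)⁻¹ := by
  obtain rfl : b = b₁ := by
    by_contra hb'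
    rcases he with rfl | rfl <;> simp [toHeisenberg, hb'] at hb
  exact he

theorem not_of_or_inv_and_of_or_inv (hb : b₀ ≠ b₁) (e : FreeGroup β) :
    ¬((e = of b₀ ∨ e = (of b₀)⁻¹) ∧ (e = of b₁ ∨ e = (of b₁)⁻¹)) := by
  rintro ⟨h₀ | h₀, h₁ | h₁⟩ <;>
    simpa [toHeisenberg, hb, hb.symm] using
      congrArg (fun g => (toHeisenberg b₀ b₁ g).a) (h₀.symm.trans h₁)

theorem of_or_inv_cases_of_commutator_toHeisenberg_ne_one {c d : FreeGroup β} {b b' : β}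
    (hc : c = of b ∨ c = (of b)⁻¹) (hd : d = of b' ∨ d = (of b')⁻¹)
    (hcd : ⁅toHeisenberg b₀ b₁ c, toHeisenberg b₀ b₁ d⁆ ≠ 1) :
    ((c = of b₀ ∨ c = (of b₀)⁻¹) ∧ (d = of b₁ ∨ d = (of b₁)⁻¹)) ∨
      ((c = of b₁ ∨ c = (of b₁)⁻¹) ∧ (d = of b₀ ∨ d = (of b₀)⁻¹)) := by
  have hdet : (toHeisenberg b₀ b₁ c).a * (toHeisenberg b₀ b₁ d).b -
      (toHeisenberg b₀ b₁ d).a * (toHeisenberg b₀ b₁ c).b ≠ 0 := fun h₀ =>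
    hcd (by rw [Heisenberg.commutator_eq, h₀]; rfl)
  by_cases hcd' : (toHeisenberg b₀ b₁ c).a * (toHeisenberg b₀ b₁ d).b = 0
  · rw [hcd', zero_sub, neg_ne_zero, mul_ne_zero_iff] at hdet
    exact .inr ⟨eq_of_or_inv_of_toHeisenberg_b_ne_zero hc hdet.2,
      eq_of_or_inv_of_toHeisenberg_a_ne_zero hd hdet.1⟩
  · rw [← ne_eq, mul_ne_zero_iff] at hcd'
    exact .inl ⟨eq_of_or_inv_of_toHeisenberg_a_ne_zero hc hcd'.1,
      eq_of_or_inv_of_toHeisenberg_b_ne_zero hd hcd'.2⟩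

theorem commutator_toHeisenberg_ne_one_of_commutator_eq (hb : b₀ ≠ b₁) {c d x y : FreeGroup β}
    (h : ⁅of b₀, of b₁⁆ = ⁅x⁻¹ * c * x, y⁻¹ * d * y⁆) :
    ⁅toHeisenberg b₀ b₁ c, toHeisenberg b₀ b₁ d⁆ ≠ 1 := by
  have hφ : ⁅toHeisenberg b₀ b₁ c, toHeisenberg b₀ b₁ d⁆ = ⟨0, 0, 1⟩ := by
    rw [← toHeisenberg_commutator_of_of hb, h]
    simp only [map_commutatorElement, _root_.map_mul, _root_.map_inv,
      Heisenberg.commutator_conj_conj]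
  rw [hφ]
  exact fun h₁ => one_ne_zero (congrArg Heisenberg.t h₁)

end FreeGroup

/-- **Lemma 19 (free2).** Let `F` be a free group on a set `B` and `b₀, b₁ ∈ B` be
distinct. If `c, d ∈ {b, b⁻¹ : b ∈ B}` and `[b₀,b₁] = [x⁻¹cx, y⁻¹dy]` for `x, y ∈ F`,
then `c, d ∈ {b₀, b₀⁻¹, b₁, b₁⁻¹}`, and moreover `c ∈ {b₀, b₀⁻¹}` iff
`d ∈ {b₁, b₁⁻¹}`, and `c ∈ {b₁, b₁⁻¹}` iff `d ∈ {b₀, b₀⁻¹}`. -/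
theorem free2 {β : Type*} (b₀ b₁ : β) (hb : b₀ ≠ b₁) (c d : FreeGroup β)
    (hc : ∃ b : β, c = FreeGroup.of b ∨ c = (FreeGroup.of b)⁻¹)
    (hd : ∃ b : β, d = FreeGroup.of b ∨ d = (FreeGroup.of b)⁻¹)
    (x y : FreeGroup β)
    (h : ⁅FreeGroup.of b₀, FreeGroup.of b₁⁆ = ⁅x⁻¹ * c * x, y⁻¹ * d * y⁆) :
    c ∈ ({FreeGroup.of b₀, (FreeGroup.of b₀)⁻¹, FreeGroup.of b₁, (FreeGroup.of b₁)⁻¹} :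
      Set (FreeGroup β)) ∧
    d ∈ ({FreeGroup.of b₀, (FreeGroup.of b₀)⁻¹, FreeGroup.of b₁, (FreeGroup.of b₁)⁻¹} :
      Set (FreeGroup β)) ∧
    ((c = FreeGroup.of b₀ ∨ c = (FreeGroup.of b₀)⁻¹) ↔
      (d = FreeGroup.of b₁ ∨ d = (FreeGroup.of b₁)⁻¹)) ∧
    ((c = FreeGroup.of b₁ ∨ c = (FreeGroup.of b₁)⁻¹) ↔
      (d = FreeGroup.of b₀ ∨ d = (FreeGroup.of b₀)⁻¹)) := by
  classical
  obtain ⟨b, hc⟩ := hc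
  obtain ⟨b', hd⟩ := hd
  have hcases := FreeGroup.of_or_inv_cases_of_commutator_toHeisenberg_ne_one hc hd
    (FreeGroup.commutator_toHeisenberg_ne_one_of_commutator_eq hb h)
  have hc₀₁ := FreeGroup.not_of_or_inv_and_of_or_inv hb c
  have hd₀₁ := FreeGroup.not_of_or_inv_and_of_or_inv hb d
  simp only [Set.mem_insert_iff, Set.mem_singleton_iff]
  rcases hcases with ⟨hc₀, hd₁⟩ | ⟨hc₁, hd₀⟩
  · exact ⟨by rcases hc₀ with he | he <;> simp only [he, true_or, or_true],
      by rcases hd₁ with he | he <;> simp only [he, true_or, or_true],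
      iff_of_true hc₀ hd₁, iff_of_false (fun he => hc₀₁ ⟨hc₀, he⟩) (fun he => hd₀₁ ⟨he, hd₁⟩)⟩
  · exact ⟨by rcases hc₁ with he | he <;> simp only [he, true_or, or_true],
      by rcases hd₀ with he | he <;> simp only [he, true_or, or_true],
      iff_of_false (fun he => hc₀₁ ⟨he, hc₁⟩) (fun he => hd₀₁ ⟨hd₀, he⟩), iff_of_true hc₁ hd₀⟩
end
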